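/- arXiv:1507.06248 — 4 statements merged into one kernel-verified Lean document; each statement's English description precedes it below -/
import Mathlib

section
/- For A ∈ ℝ^{n×n}, b ∈ ℝ^n, τ > 0, and 0 ≤ t ≤ τ, define G(A,t) = ∫₀ᵗ e^{A(t−s)} ds. Then ‖G(A,t)b − (t/τ)G(A,τ)b‖ ≤ (t/τ)·(e^{τ‖A‖} − 1 − τ‖A‖)·‖b‖/‖A‖, provided ‖A‖ > 0. -/
/-!
Substituting `r = c - s` and then `r = c u` turns the vector inside the norm into
`t ∫₀¹ (e^{tuA} - e^{τuA}) b du`. Comparing exponential series termwise gives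
`‖e^{xA} - e^{yA}‖ ≤ e^{y‖A‖} - e^{x‖A‖} ≤ e^{y‖A‖} - 1` for `0 ≤ x ≤ y`, and
`∫₀¹ (e^{τ‖A‖u} - 1) du = (e^{τ‖A‖} - 1)/(τ‖A‖) - 1`.
-/

open NormedSpace intervalIntegral
open scoped Nat

theorem norm_exp_smul_sub_exp_smul_le {𝔸 : Type*} [NormedRing 𝔸] [NormedAlgebra ℝ 𝔸]
    [CompleteSpace 𝔸] (a : 𝔸) {x y : ℝ} (hx : 0 ≤ x) (hxy : x ≤ y) :
    ‖exp (x • a) - exp (y • a)‖ ≤ Real.exp (y * ‖a‖) - Real.exp (x * ‖a‖) := by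
  have hseries : HasSum (fun k : ℕ => (k !⁻¹ : ℝ) • ((x • a) ^ k - (y • a) ^ k))
      (exp (x • a) - exp (y • a)) := by
    simpa only [smul_sub] using
      (exp_series_hasSum_exp' (𝕂 := ℝ) (x • a)).sub (exp_series_hasSum_exp' (𝕂 := ℝ) (y • a))
  have hmajorant : HasSum (fun k : ℕ => (y * ‖a‖) ^ k / (k ! : ℝ) - (x * ‖a‖) ^ k / (k ! : ℝ))
      (Real.exp (y * ‖a‖) - Real.exp (x * ‖a‖)) := by
    rw [Real.exp_eq_exp_ℝ]
    exact (expSeries_div_hasSum_exp (y * ‖a‖)).sub (expSeries_div_hasSum_exp (x * ‖a‖))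
  rw [← hseries.tsum_eq]
  refine tsum_of_norm_bounded hmajorant fun k => ?_
  have hpow : x ^ k ≤ y ^ k := pow_le_pow_left₀ hx hxy k
  -- `‖a ^ 0‖ = ‖1‖` may exceed `1`, but its coefficient vanishes
  have hnorm_pow : (y ^ k - x ^ k) * ‖a ^ k‖ ≤ (y ^ k - x ^ k) * ‖a‖ ^ k := by
    rcases k with _ | k
    · simp
    · exact mul_le_mul_of_nonneg_left (norm_pow_le' a k.succ_pos) (sub_nonneg.2 hpow)
  calc ‖(k !⁻¹ : ℝ) • ((x • a) ^ k - (y • a) ^ k)‖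
      = (k !⁻¹ : ℝ) * ((y ^ k - x ^ k) * ‖a ^ k‖) := by
        rw [smul_pow, smul_pow, ← sub_smul, norm_smul, norm_smul, norm_sub_rev,
          Real.norm_of_nonneg (sub_nonneg.2 hpow), Real.norm_of_nonneg (by positivity)]
    _ ≤ (k !⁻¹ : ℝ) * ((y ^ k - x ^ k) * ‖a‖ ^ k) := by gcongr
    _ = (y * ‖a‖) ^ k / (k ! : ℝ) - (x * ‖a‖) ^ k / (k ! : ℝ) := by ring

theorem integral_sub_div_smul_integral_eq {E : Type*} [NormedAddCommGroup E] [NormedSpace ℝ E]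
    {f : ℝ → E} (hf : Continuous f) (t : ℝ) {τ : ℝ} (hτ : τ ≠ 0) :
    (∫ r in (0 : ℝ)..t, f r) - (t / τ) • ∫ r in (0 : ℝ)..τ, f r =
      t • ∫ u in (0 : ℝ)..1, (f (t * u) - f (τ * u)) := by
  have hrescale (c : ℝ) : ∫ r in (0 : ℝ)..c, f r = c • ∫ u in (0 : ℝ)..1, f (c * u) := by
    simp
  have hint (c : ℝ) : IntervalIntegrable (fun u => f (c * u)) MeasureTheory.volume 0 1 :=
    (hf.comp (continuous_const_mul c)).intervalIntegrable _ _
  rw [hrescale t, hrescale τ, smul_smul, div_mul_cancel₀ _ hτ, integral_sub (hint t) (hint τ),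
    smul_sub]

theorem integral_exp_mul_sub_one {c : ℝ} (hc : c ≠ 0) :
    ∫ u in (0 : ℝ)..1, (Real.exp (c * u) - 1) = (Real.exp c - 1) / c - 1 := by
  rw [integral_sub ((by fun_prop : Continuous fun u => Real.exp (c * u)).intervalIntegrable _ _)
    intervalIntegrable_const, integral_comp_mul_left Real.exp hc, integral_exp]
  simp only [mul_one, mul_zero, Real.exp_zero, smul_eq_mul, integral_const, sub_zero]
  ring

/-- With `G(A,t) = ∫₀ᵗ e^{A(t−s)} ds`, the bound
`‖G(A,t)b − (t/τ)G(A,τ)b‖ ≤ (t/τ)(e^{τ‖A‖} − 1 − τ‖A‖)‖b‖/‖A‖` holds for `0 ≤ t ≤ τ`. -/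
theorem stmt4 (n : ℕ) (A : (Fin n → ℝ) →L[ℝ] (Fin n → ℝ)) (hA : 0 < ‖A‖)
    (b : Fin n → ℝ) (τ t : ℝ) (hτ : 0 < τ) (ht0 : 0 ≤ t) (htτ : t ≤ τ) :
    ‖(∫ s in (0 : ℝ)..t, (NormedSpace.exp ((t - s) • A)) b) -
        (t / τ) • (∫ s in (0 : ℝ)..τ, (NormedSpace.exp ((τ - s) • A)) b)‖ ≤
      (t / τ) * (Real.exp (τ * ‖A‖) - 1 - τ * ‖A‖) * ‖b‖ / ‖A‖ := by
  set f : ℝ → (Fin n → ℝ) := fun r => exp (r • A) b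
  have hf : Continuous f :=
    (continuous_iff_continuousAt.2 fun r => (hasDerivAt_exp_smul_const A r).continuousAt).clm_apply
      continuous_const
  have hreverse (c : ℝ) : ∫ s in (0 : ℝ)..c, exp ((c - s) • A) b = ∫ r in (0 : ℝ)..c, f r := by
    simpa only [sub_self, sub_zero] using integral_comp_sub_left (a := 0) (b := c) f c
  have hpointwise : ∀ u ∈ Set.Ioc (0 : ℝ) 1,
      ‖f (t * u) - f (τ * u)‖ ≤ (Real.exp (τ * ‖A‖ * u) - 1) * ‖b‖ := by
    rintro u ⟨hu0, -⟩
    have hmono : 1 ≤ Real.exp (t * u * ‖A‖) := Real.one_le_exp (by positivity)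
    calc ‖f (t * u) - f (τ * u)‖ = ‖(exp ((t * u) • A) - exp ((τ * u) • A)) b‖ := rfl
      _ ≤ ‖exp ((t * u) • A) - exp ((τ * u) • A)‖ * ‖b‖ := ContinuousLinearMap.le_opNorm _ _
      _ ≤ (Real.exp (τ * u * ‖A‖) - Real.exp (t * u * ‖A‖)) * ‖b‖ := by
        gcongr
        exact norm_exp_smul_sub_exp_smul_le A (by positivity) (by gcongr)
      _ ≤ (Real.exp (τ * ‖A‖ * u) - 1) * ‖b‖ := by
        rw [mul_right_comm τ]
        gcongr
  calc _ = t * ‖∫ u in (0 : ℝ)..1, (f (t * u) - f (τ * u))‖ := by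
        rw [hreverse, hreverse, integral_sub_div_smul_integral_eq hf t hτ.ne', norm_smul,
          Real.norm_of_nonneg ht0]
    _ ≤ t * ∫ u in (0 : ℝ)..1, (Real.exp (τ * ‖A‖ * u) - 1) * ‖b‖ := by
        gcongr
        exact norm_integral_le_of_norm_le zero_le_one (.of_forall hpointwise)
          (Continuous.intervalIntegrable (by fun_prop) _ _)
    _ = t * (((Real.exp (τ * ‖A‖) - 1) / (τ * ‖A‖) - 1) * ‖b‖) := by
        rw [integral_mul_const, integral_exp_mul_sub_one (mul_pos hτ hA).ne']
    _ = _ := by field_simp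
end

section
/- For A ∈ ℝ^{n×n}, τ > 0, 0 ≤ t ≤ τ, and x₀ ∈ ℝ^n, the interpolation error bound ‖e^{tA}x₀ − x₀ − (t/τ)(e^{τA} − I)x₀‖ ≤ (t/τ)·(e^{τ‖A‖} − 1 − τ‖A‖)·‖x₀‖ holds. -/
/-!
With `R(x) = eˣ - 1 - x = ∑_{k ≥ 2} xᵏ / k!`, the linear terms cancel and the error is
`R(tA) - (t/τ) R(τA) = ∑_{k ≥ 2} (tᵏ - (t/τ) τᵏ) / k! • Aᵏ`. For `0 ≤ t ≤ τ` and `k ≥ 1` we have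
`0 ≤ tᵏ ≤ (t/τ) τᵏ`, so each coefficient is at most `(t/τ) τᵏ / k!` in absolute value, and the
series of norms is dominated by `(t/τ) R(τ‖A‖)`.
-/

open NormedSpace Nat

section

variable {𝕂 𝔸 : Type*} [NontriviallyNormedField 𝕂] [CharZero 𝕂] [ContinuousSMul ℚ 𝕂]
  [NormedRing 𝔸] [NormedAlgebra 𝕂 𝔸] [CompleteSpace 𝔸]

variable (𝕂) in
theorem hasSum_exp_sub_one_sub (x : 𝔸) :
    HasSum (fun k => ((k + 2)! : 𝕂)⁻¹ • x ^ (k + 2)) (exp x - 1 - x) := by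
  have := (hasSum_nat_add_iff' 2).mpr (exp_series_hasSum_exp' (𝕂 := 𝕂) x)
  simpa [Finset.sum_range_succ, sub_sub] using this

end

theorem Real.hasSum_exp_sub_one_sub (x : ℝ) :
    HasSum (fun k => x ^ (k + 2) / (k + 2)!) (Real.exp x - 1 - x) := by
  simpa [Real.exp_eq_exp_ℝ, div_eq_inv_mul] using _root_.hasSum_exp_sub_one_sub ℝ x

theorem abs_pow_sub_div_mul_pow_le {t τ : ℝ} (hτ : 0 < τ) (ht0 : 0 ≤ t) (htτ : t ≤ τ)
    {k : ℕ} (hk : k ≠ 0) : |t ^ k - t / τ * τ ^ k| ≤ t / τ * τ ^ k := by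
  have hle : t ^ k ≤ t / τ * τ ^ k := by
    obtain ⟨j, rfl⟩ := Nat.exists_eq_add_one_of_ne_zero hk
    calc t ^ (j + 1) = t * t ^ j := pow_succ' t j
      _ ≤ t * τ ^ j := by gcongr
      _ = t / τ * τ ^ (j + 1) := by field_simp; ring
  exact abs_sub_le_of_nonneg_of_le (by positivity) hle (by positivity) le_rfl

theorem norm_exp_smul_interpolation_error_le {𝔸 : Type*} [NormedRing 𝔸] [NormedAlgebra ℝ 𝔸]
    [CompleteSpace 𝔸] (a : 𝔸) {t τ : ℝ} (hτ : 0 < τ) (ht0 : 0 ≤ t) (htτ : t ≤ τ) :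
    ‖exp (t • a) - 1 - (t / τ) • (exp (τ • a) - 1)‖ ≤
      t / τ * (Real.exp (τ * ‖a‖) - 1 - τ * ‖a‖) := by
  have hsplit : exp (t • a) - 1 - (t / τ) • (exp (τ • a) - 1) =
      (exp (t • a) - 1 - t • a) - (t / τ) • (exp (τ • a) - 1 - τ • a) := by
    rw [smul_sub _ _ (τ • a), smul_smul, div_mul_cancel₀ t hτ.ne']
    abel
  rw [hsplit]
  refine ((hasSum_exp_sub_one_sub ℝ (t • a)).sub
    ((hasSum_exp_sub_one_sub ℝ (τ • a)).const_smul (t / τ))).norm_le_of_bounded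
    ((Real.hasSum_exp_sub_one_sub (τ * ‖a‖)).mul_left (t / τ)) fun k => ?_
  calc ‖((k + 2)! : ℝ)⁻¹ • (t • a) ^ (k + 2) - (t / τ) • ((k + 2)! : ℝ)⁻¹ • (τ • a) ^ (k + 2)‖
      = ‖((t ^ (k + 2) - t / τ * τ ^ (k + 2)) / (k + 2)!) • a ^ (k + 2)‖ := by
        rw [smul_pow, smul_pow, smul_smul, smul_smul, smul_smul, ← sub_smul]
        congr 2
        ring
    _ = |t ^ (k + 2) - t / τ * τ ^ (k + 2)| / (k + 2)! * ‖a ^ (k + 2)‖ := by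
        rw [norm_smul, Real.norm_eq_abs, abs_div, Nat.abs_cast]
    _ ≤ t / τ * τ ^ (k + 2) / (k + 2)! * ‖a‖ ^ (k + 2) := by
        gcongr
        · exact abs_pow_sub_div_mul_pow_le hτ ht0 htτ (by omega)
        · exact norm_pow_le' a (by omega)
    _ = t / τ * ((τ * ‖a‖) ^ (k + 2) / (k + 2)!) := by ring

/-- Interpolation error bound:
`‖e^{tA}x₀ − x₀ − (t/τ)(e^{τA} − I)x₀‖ ≤ (t/τ)(e^{τ‖A‖} − 1 − τ‖A‖)‖x₀‖` for `0 ≤ t ≤ τ`. -/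
theorem stmt5 (n : ℕ) (A : (Fin n → ℝ) →L[ℝ] (Fin n → ℝ))
    (τ t : ℝ) (hτ : 0 < τ) (ht0 : 0 ≤ t) (htτ : t ≤ τ) (x₀ : Fin n → ℝ) :
    ‖(NormedSpace.exp (t • A)) x₀ - x₀ -
        (t / τ) • ((NormedSpace.exp (τ • A) - 1) x₀)‖ ≤
      (t / τ) * (Real.exp (τ * ‖A‖) - 1 - τ * ‖A‖) * ‖x₀‖ := by
  calc _ = ‖(exp (t • A) - 1 - (t / τ) • (exp (τ • A) - 1)) x₀‖ := rfl
    _ ≤ ‖exp (t • A) - 1 - (t / τ) • (exp (τ • A) - 1)‖ * ‖x₀‖ :=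
        ContinuousLinearMap.le_opNorm _ x₀
    _ ≤ _ := by
        gcongr
        exact norm_exp_smul_interpolation_error_le A hτ ht0 htτ
end

section
/- Suppose x : [0, τ] → ℝ^n and x̂ : [0, τ] → ℝ^n satisfy ‖x(t) − x̂(t)‖_∞ ≤ (t/τ)·c for all t ∈ [0, τ], with c ≥ 0, and suppose x̂(t) = (1 − t/τ)·x(0) + (t/τ)·y(t) where y(t) lies in a convex set Y for all t. Then for every t ∈ [0, τ], x(t) ∈ CH(X₀, Y ⊕ B_c), where X₀ is any convex set containing x(0), B_c = {z : ‖z‖_∞ ≤ c}, ⊕ is Minkowski sum, and CH is the joint convex hull. -/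
open Pointwise

/-- If `‖x(t) − x̂(t)‖ ≤ (t/τ)c` with `x̂(t) = (1 − t/τ)x(0) + (t/τ)y(t)`, `y(t) ∈ Y` convex,
then `x(t) ∈ CH(X₀, Y ⊕ B_c)` for any convex `X₀ ∋ x(0)`. -/
theorem stmt8 (n : ℕ) (τ c : ℝ) (hτ : 0 < τ) (hc : 0 ≤ c)
    (x xhat y : ℝ → (Fin n → ℝ)) (Y X₀ : Set (Fin n → ℝ))
    (hY : Convex ℝ Y) (hX₀ : Convex ℝ X₀) (hx0 : x 0 ∈ X₀)
    (herr : ∀ t ∈ Set.Icc (0 : ℝ) τ, ‖x t - xhat t‖ ≤ (t / τ) * c)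
    (hxhat : ∀ t ∈ Set.Icc (0 : ℝ) τ, xhat t = (1 - t / τ) • x 0 + (t / τ) • y t)
    (hy : ∀ t ∈ Set.Icc (0 : ℝ) τ, y t ∈ Y) :
    ∀ t ∈ Set.Icc (0 : ℝ) τ,
      x t ∈ {z : Fin n → ℝ | ∃ p ∈ X₀, ∃ q ∈ Y + {w : Fin n → ℝ | ‖w‖ ≤ c},
        ∃ l ∈ Set.Icc (0 : ℝ) 1, z = l • p + (1 - l) • q} := by
  intro t ht
  obtain ⟨ht0, htτ⟩ := ht
  set lam := t / τ with hlam
  have hlam0 : 0 ≤ lam := div_nonneg ht0 hτ.le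
  have hlam1 : lam ≤ 1 := (div_le_one hτ).mpr htτ
  have he := herr t ⟨ht0, htτ⟩
  have hx := hxhat t ⟨ht0, htτ⟩
  have hyt := hy t ⟨ht0, htτ⟩
  by_cases h0 : lam = 0
  · have hxe : x t = x 0 := by
      have : ‖x t - xhat t‖ ≤ 0 := by rw [← hlam] at he; simpa [h0] using he
      have hx' : x t = xhat t := sub_eq_zero.mp (norm_le_zero_iff.mp this)
      rw [hx', hx, ← hlam, h0]; simp
    refine ⟨x 0, hx0, y t + 0, ⟨y t, hyt, 0, by simpa using hc, rfl⟩, 1, ⟨zero_le_one, le_refl 1⟩, ?_⟩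
    simp [hxe]
  · have hlampos : 0 < lam := lt_of_le_of_ne hlam0 (Ne.symm h0)
    set e := x t - xhat t with he_def
    set w := lam⁻¹ • e with hw
    have hwnorm : ‖w‖ ≤ c := by
      rw [hw, norm_smul]
      have : ‖e‖ ≤ lam * c := by rw [← hlam] at he; exact he
      calc ‖lam⁻¹‖ * ‖e‖ ≤ ‖lam⁻¹‖ * (lam * c) := by
            apply mul_le_mul_of_nonneg_left this (norm_nonneg _)
        _ = c := by
            rw [Real.norm_eq_abs, abs_of_pos (inv_pos.mpr hlampos)]
            field_simp
    refine ⟨x 0, hx0, y t + w, ⟨y t, hyt, w, hwnorm, rfl⟩, 1 - lam,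
      ⟨by linarith, by linarith⟩, ?_⟩
    have : x t = xhat t + e := by rw [he_def]; abel
    rw [this, hx, ← hlam]
    have hlw : lam • w = e := by rw [hw, smul_smul, mul_inv_cancel₀ (ne_of_gt hlampos), one_smul]
    have hl : (1 : ℝ) - (1 - lam) = lam := by ring
    rw [hl, smul_add, hlw]
    abel
end

section
/- Let Z₁ = (c₁; g₁⁽¹⁾,…,g₁⁽ˡ⁾) and Z₂ = (c₂; g₂⁽¹⁾,…,g₂⁽ˡ⁾) be zonotopes in ℝ^n with the same number l of generators. Define the zonotope CH̄(Z₁,Z₂) = ½·(c₁+c₂; g₁⁽¹⁾+g₂⁽¹⁾, …, g₁⁽ˡ⁾+g₂⁽ˡ⁾, c₁−c₂, g₁⁽¹⁾−g₂⁽¹⁾, …, g₁⁽ˡ⁾−g₂⁽ˡ⁾). Then the convex hull of Z₁ ∪ Z₂ is contained in CH̄(Z₁,Z₂). -/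
/-- A zonotope with center `c` and generators `g i`. -/
def zonotope {n l : ℕ} (c : Fin n → ℝ) (g : Fin l → (Fin n → ℝ)) : Set (Fin n → ℝ) :=
  {x | ∃ lam : Fin l → ℝ, (∀ i, lam i ∈ Set.Icc (-1 : ℝ) 1) ∧ x = c + ∑ i, lam i • g i}

/-- The convex hull of the union of two zonotopes with equally many generators is contained
in the zonotope `½·(c₁+c₂; g₁+g₂, c₁−c₂, g₁−g₂)`. -/
theorem stmt14 (n l : ℕ) (c₁ c₂ : Fin n → ℝ) (g₁ g₂ : Fin l → (Fin n → ℝ)) :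
    convexHull ℝ (zonotope c₁ g₁ ∪ zonotope c₂ g₂) ⊆
      {x : Fin n → ℝ | ∃ lam : Fin l → ℝ, ∃ mu : ℝ, ∃ nu : Fin l → ℝ,
        (∀ i, lam i ∈ Set.Icc (-1 : ℝ) 1) ∧ mu ∈ Set.Icc (-1 : ℝ) 1 ∧
        (∀ i, nu i ∈ Set.Icc (-1 : ℝ) 1) ∧
        x = (1 / 2 : ℝ) • (c₁ + c₂ + ∑ i, lam i • (g₁ i + g₂ i) + mu • (c₁ - c₂) +
          ∑ i, nu i • (g₁ i - g₂ i))} := by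
  apply convexHull_min
  · rintro x (⟨lam, hlam, rfl⟩ | ⟨lam, hlam, rfl⟩)
    · refine ⟨lam, 1, lam, hlam, ⟨by norm_num, le_refl 1⟩, hlam, ?_⟩
      have : ∀ i : Fin l, lam i • (g₁ i + g₂ i) + lam i • (g₁ i - g₂ i)
          = (2 : ℝ) • (lam i • g₁ i) := by
        intro i; module
      rw [show (1:ℝ) • (c₁ - c₂) = c₁ - c₂ from one_smul ℝ _]
      rw [add_right_comm _ (c₁ - c₂), add_assoc _ _ (∑ i, lam i • (g₁ i - g₂ i)),
        ← Finset.sum_add_distrib]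
      simp only [this]
      rw [← Finset.smul_sum]
      module
    · refine ⟨lam, -1, -lam, hlam, ⟨le_refl _, by norm_num⟩,
        fun i => by simp only [Pi.neg_apply]; constructor <;> linarith [(hlam i).1, (hlam i).2], ?_⟩
      have : ∀ i : Fin l, lam i • (g₁ i + g₂ i) + (-lam) i • (g₁ i - g₂ i)
          = (2 : ℝ) • (lam i • g₂ i) := by
        intro i; simp only [Pi.neg_apply]; module
      rw [add_right_comm _ ((-1:ℝ) • (c₁ - c₂)), add_assoc _ _ (∑ i, (-lam) i • (g₁ i - g₂ i)),
        ← Finset.sum_add_distrib]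
      simp only [this]
      rw [← Finset.smul_sum]
      module
  · rintro x ⟨lx, mx, nx, hlx, hmx, hnx, rfl⟩ y ⟨ly, my, ny, hly, hmy, hny, rfl⟩ a b ha hb hab
    refine ⟨a • lx + b • ly, a * mx + b * my, a • nx + b • ny,
      fun i => (convex_Icc (-1:ℝ) 1) (hlx i) (hly i) ha hb hab,
      (convex_Icc (-1:ℝ) 1) hmx hmy ha hb hab,
      fun i => (convex_Icc (-1:ℝ) 1) (hnx i) (hny i) ha hb hab, ?_⟩
    have hb' : b = 1 - a := by linarith
    subst hb'
    have h1 : ∑ i, (a • lx + (1-a) • ly) i • (g₁ i + g₂ i)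
        = a • ∑ i, lx i • (g₁ i + g₂ i) + (1-a) • ∑ i, ly i • (g₁ i + g₂ i) := by
      rw [Finset.smul_sum, Finset.smul_sum, ← Finset.sum_add_distrib]
      refine Finset.sum_congr rfl fun i _ => ?_
      simp only [Pi.add_apply, Pi.smul_apply, smul_eq_mul]
      module
    have h2 : ∑ i, (a • nx + (1-a) • ny) i • (g₁ i - g₂ i)
        = a • ∑ i, nx i • (g₁ i - g₂ i) + (1-a) • ∑ i, ny i • (g₁ i - g₂ i) := by
      rw [Finset.smul_sum, Finset.smul_sum, ← Finset.sum_add_distrib]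
      refine Finset.sum_congr rfl fun i _ => ?_
      simp only [Pi.add_apply, Pi.smul_apply, smul_eq_mul]
      module
    rw [h1, h2]
    module
end
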